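/- arXiv:1308.5141 — 3 statements merged into one kernel-verified Lean document; each statement's English description precedes it below -/
import Mathlib

section
/- Let T ∈ (0,1], a ∈ (0,1/2), and b, c ≥ 0. Suppose f : [0,T] → ℝ is continuous, uniformly bounded by 1, and satisfies |f(t) - f(0)| ≤ b·t + c·(∫₀ᵗ |f(s)| ds)^a for all t ∈ [0,T]. Then for any ξ' ∈ (0,1) and N' ∈ ℕ with Σ_{j=1}^{N'} a^j ≤ ξ' < Σ_{j=1}^{N'+1} a^j, we have for all t ∈ [0,T]: |f(t) - f(0)| ≤ [(c^{1/(1-a)} + 1) Σ_{j=1}^{N'} |f(0)|^{a^j}] t^a + [b + (c^{1/(1-a)} + 1) Σ_{j=1}^{N'} (b/2)^{a^j} + c^{1/(1-a)} + 1] t^{ξ'}. -/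
/-!
Write `ξₙ = a + a² + ⋯ + aⁿ` and `D = c^{1/(1-a)} + 1`. By induction on `n`,
`|f t - f 0| ≤ b t + D Qₙ(t)` with
`Qₙ(t) = ∑_{j ≤ n} (|f 0|^{aʲ} t^{ξⱼ} + (b/2)^{aʲ} t^{ξⱼ + aʲ}) + t^{ξₙ₊₁}`:
inserting the bound for `n` into the integral inequality, integrating, and splitting the `a`-th
power by its subadditivity turns each term `z tᵖ` into `z^a t^{a p + a}`, and the constant `D`
survives because `c D^a ≤ D`. For `t ≤ 1` one has `t^{ξⱼ} ≤ t^a`, and since `a ≤ 1/2` the tail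
`a^{j+1} + a^{j+2} + ⋯` is at most `aʲ`, so `ξⱼ + aʲ ≥ ξ_{N'+1} > ξ'` for `j ≤ N'`; this turns
`Q_{N'}` into the stated bound.
-/

open MeasureTheory Finset

namespace Real

theorem rpow_sum_le_sum_rpow {ι : Type*} (s : Finset ι) {g : ι → ℝ} (hg : ∀ i ∈ s, 0 ≤ g i)
    {p : ℝ} (hp : 0 < p) (hp1 : p ≤ 1) : (∑ i ∈ s, g i) ^ p ≤ ∑ i ∈ s, g i ^ p :=
  le_sum_of_subadditive_on_pred (· ^ p) (0 ≤ ·) (zero_rpow hp.ne').le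
    (fun _ _ hx hy => rpow_add_le_add_rpow hx hy hp.le hp1) (fun _ _ => add_nonneg) g hg

theorem mul_rpow_le_of_rpow_one_div_one_sub_le {a c D : ℝ} (hc : 0 ≤ c) (ha : a < 1)
    (hD : c ^ (1 / (1 - a)) ≤ D) : c * D ^ a ≤ D := by
  have hD0 : 0 ≤ D := (rpow_nonneg hc _).trans hD
  have hcD : c ≤ D ^ (1 - a) := by
    calc c = (c ^ (1 / (1 - a))) ^ (1 - a) := by
          rw [← rpow_mul hc, one_div_mul_cancel (by linarith), rpow_one]
      _ ≤ D ^ (1 - a) := rpow_le_rpow (rpow_nonneg hc _) hD (by linarith)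
  calc c * D ^ a ≤ D ^ (1 - a) * D ^ a := by gcongr
    _ = D := by rw [← rpow_add' hD0 (by norm_num), sub_add_cancel, rpow_one]

theorem rpow_mul_rpow_rpow_mul {z t p q a : ℝ} (hz : 0 ≤ z) (ht : 0 ≤ t)
    (h : p * a + a ≠ 0) : (z ^ q * t ^ p) ^ a * t ^ a = z ^ (q * a) * t ^ (p * a + a) := by
  rw [mul_rpow (rpow_nonneg hz _) (rpow_nonneg ht _), ← rpow_mul hz,
    ← rpow_mul ht, mul_assoc, ← rpow_add' ht h]

end Real

theorem Finset.sum_Icc_one_succ {M : Type*} [AddCommMonoid M] (g : ℕ → M) (n : ℕ) :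
    ∑ j ∈ Icc 1 (n + 1), g j = g 1 + ∑ j ∈ Icc 1 n, g (j + 1) := by
  induction n with
  | zero => simp
  | succ n ih =>
    rw [sum_Icc_succ_top (by omega), ih, sum_Icc_succ_top (by omega), add_assoc]

def geomSum (a : ℝ) (n : ℕ) : ℝ := ∑ j ∈ Icc 1 n, a ^ j

theorem geomSum_succ (a : ℝ) (n : ℕ) : geomSum a (n + 1) = geomSum a n * a + a := by
  simp only [geomSum, sum_Icc_one_succ, pow_succ, ← sum_mul]
  ring

theorem geomSum_succ' (a : ℝ) (n : ℕ) : geomSum a (n + 1) = geomSum a n + a ^ (n + 1) :=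
  sum_Icc_succ_top (by omega) _

theorem geomSum_nonneg {a : ℝ} (ha : 0 ≤ a) (n : ℕ) : 0 ≤ geomSum a n :=
  sum_nonneg fun j _ => pow_nonneg ha j

theorem le_geomSum {a : ℝ} (ha : 0 ≤ a) {n : ℕ} (hn : 1 ≤ n) : a ≤ geomSum a n := by
  obtain ⟨k, rfl⟩ := Nat.exists_eq_add_of_le' hn
  rw [geomSum_succ]
  nlinarith [geomSum_nonneg ha k]

theorem geomSum_le_add_pow {a : ℝ} (ha0 : 0 ≤ a) (ha : a ≤ 1 / 2) {k m : ℕ} (hkm : k ≤ m) :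
    geomSum a m ≤ geomSum a k + a ^ k := by
  have hanti : Antitone fun n => geomSum a n + 2 * a ^ (n + 1) := by
    refine antitone_nat_of_succ_le fun n => ?_
    rw [geomSum_succ', pow_succ a (n + 1)]
    nlinarith [pow_nonneg ha0 (n + 1)]
  calc geomSum a m ≤ geomSum a m + 2 * a ^ (m + 1) := by
        have := pow_nonneg ha0 (m + 1); linarith
    _ ≤ geomSum a k + 2 * a ^ (k + 1) := hanti hkm
    _ ≤ geomSum a k + a ^ k := by
        rw [pow_succ]; nlinarith [pow_nonneg ha0 k]

noncomputable def iterTerm (a x y : ℝ) (j : ℕ) (t : ℝ) : ℝ :=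
  x ^ a ^ j * t ^ geomSum a j + y ^ a ^ j * t ^ (geomSum a j + a ^ j)

noncomputable def iterBound (a x y : ℝ) (n : ℕ) (t : ℝ) : ℝ :=
  ∑ j ∈ Icc 1 n, iterTerm a x y j t + t ^ geomSum a (n + 1)

section iterBound

variable {a x y : ℝ}

theorem iterTerm_nonneg (hx : 0 ≤ x) (hy : 0 ≤ y) (j : ℕ) {t : ℝ} (ht : 0 ≤ t) :
    0 ≤ iterTerm a x y j t := by
  unfold iterTerm
  positivity

theorem iterTerm_one (ha : 0 < a) {t : ℝ} (ht : 0 ≤ t) :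
    iterTerm a x y 1 t = (x ^ a + y ^ a * t ^ a) * t ^ a := by
  have : geomSum a 1 = a := by simp [geomSum]
  rw [iterTerm, this, pow_one, Real.rpow_add' ht (add_pos ha ha).ne']
  ring

theorem rpow_iterTerm_mul_le (ha : 0 < a) (ha1 : a ≤ 1) (hx : 0 ≤ x) (hy : 0 ≤ y) (j : ℕ)
    {t : ℝ} (ht : 0 ≤ t) : iterTerm a x y j t ^ a * t ^ a ≤ iterTerm a x y (j + 1) t := by
  have hξ := geomSum_nonneg ha.le j
  have hpow := pow_nonneg ha.le j
  calc iterTerm a x y j t ^ a * t ^ a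
      ≤ ((x ^ a ^ j * t ^ geomSum a j) ^ a
          + (y ^ a ^ j * t ^ (geomSum a j + a ^ j)) ^ a) * t ^ a := by
        gcongr
        exact Real.rpow_add_le_add_rpow (by positivity) (by positivity) ha.le ha1
    _ = iterTerm a x y (j + 1) t := by
        rw [add_mul, Real.rpow_mul_rpow_rpow_mul hx ht (by positivity),
          Real.rpow_mul_rpow_rpow_mul hy ht (by positivity), iterTerm, geomSum_succ, pow_succ]
        ring_nf

theorem rpow_rpow_geomSum_mul (ha : 0 < a) {t : ℝ} (ht : 0 ≤ t) (n : ℕ) :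
    (t ^ geomSum a n) ^ a * t ^ a = t ^ geomSum a (n + 1) := by
  have hξ := geomSum_nonneg ha.le n
  rw [← Real.rpow_mul ht, ← Real.rpow_add' ht (by positivity), geomSum_succ]

theorem iterBound_zero (a x y t : ℝ) : iterBound a x y 0 t = t ^ a := by
  simp [iterBound, geomSum]

theorem iterBound_nonneg (hx : 0 ≤ x) (hy : 0 ≤ y) (n : ℕ) {t : ℝ} (ht : 0 ≤ t) :
    0 ≤ iterBound a x y n t :=
  add_nonneg (sum_nonneg fun j _ => iterTerm_nonneg hx hy j ht) (Real.rpow_nonneg ht _)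

theorem iterBound_mono (ha : 0 ≤ a) (hx : 0 ≤ x) (hy : 0 ≤ y) (n : ℕ) {s t : ℝ} (hs : 0 ≤ s)
    (hst : s ≤ t) : iterBound a x y n s ≤ iterBound a x y n t := by
  have hξ := geomSum_nonneg ha
  simp only [iterBound, iterTerm]
  gcongr with j hj
  · exact hξ j
  · exact add_nonneg (hξ j) (pow_nonneg ha j)
  · exact hξ _

theorem iterBound_succ (ha : 0 < a) (ha1 : a ≤ 1) (hx : 0 ≤ x) (hy : 0 ≤ y) (n : ℕ) {t : ℝ}
    (ht : 0 ≤ t) :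
    (x ^ a + y ^ a * t ^ a + iterBound a x y n t ^ a) * t ^ a ≤ iterBound a x y (n + 1) t := by
  have hterm := fun j => iterTerm_nonneg (a := a) hx hy j ht
  have hsub : iterBound a x y n t ^ a
      ≤ ∑ j ∈ Icc 1 n, iterTerm a x y j t ^ a + (t ^ geomSum a (n + 1)) ^ a :=
    calc iterBound a x y n t ^ a
        ≤ (∑ j ∈ Icc 1 n, iterTerm a x y j t) ^ a + (t ^ geomSum a (n + 1)) ^ a :=
          Real.rpow_add_le_add_rpow (sum_nonneg fun j _ => hterm j) (by positivity) ha.le ha1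
      _ ≤ ∑ j ∈ Icc 1 n, iterTerm a x y j t ^ a + (t ^ geomSum a (n + 1)) ^ a := by
          gcongr
          exact Real.rpow_sum_le_sum_rpow _ (fun j _ => hterm j) ha ha1
  calc (x ^ a + y ^ a * t ^ a + iterBound a x y n t ^ a) * t ^ a
      ≤ (x ^ a + y ^ a * t ^ a
          + (∑ j ∈ Icc 1 n, iterTerm a x y j t ^ a + (t ^ geomSum a (n + 1)) ^ a)) * t ^ a := by
        gcongr
    _ = iterTerm a x y 1 t + ∑ j ∈ Icc 1 n, iterTerm a x y j t ^ a * t ^ a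
          + (t ^ geomSum a (n + 1)) ^ a * t ^ a := by
        rw [iterTerm_one ha ht, ← sum_mul]
        ring
    _ ≤ iterTerm a x y 1 t + ∑ j ∈ Icc 1 n, iterTerm a x y (j + 1) t
          + t ^ geomSum a (n + 1 + 1) := by
        rw [rpow_rpow_geomSum_mul ha ht]
        gcongr with j
        exact rpow_iterTerm_mul_le ha ha1 hx hy j ht
    _ = iterBound a x y (n + 1) t := by
        rw [iterBound, sum_Icc_one_succ]

end iterBound

theorem iterBound_le {a x y : ℝ} (ha0 : 0 < a) (ha : a ≤ 1 / 2) (hx : 0 ≤ x) (hy : 0 ≤ y)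
    {N : ℕ} {ξ : ℝ} (hξ0 : 0 ≤ ξ) (hξ : ξ ≤ geomSum a (N + 1)) {t : ℝ} (ht0 : 0 ≤ t)
    (ht1 : t ≤ 1) :
    iterBound a x y N t
      ≤ (∑ j ∈ Icc 1 N, x ^ a ^ j) * t ^ a + (∑ j ∈ Icc 1 N, y ^ a ^ j + 1) * t ^ ξ := by
  have hpow_le {p q : ℝ} (hq : 0 ≤ q) (hqp : q ≤ p) : t ^ p ≤ t ^ q :=
    Real.rpow_le_rpow_of_exponent_ge' ht0 ht1 hq hqp
  simp only [iterBound, iterTerm]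
  rw [sum_add_distrib, add_mul, one_mul, sum_mul, sum_mul, add_assoc]
  refine add_le_add (sum_le_sum fun j hj => ?_) (add_le_add (sum_le_sum fun j hj => ?_) ?_)
  · exact mul_le_mul_of_nonneg_left (hpow_le ha0.le (le_geomSum ha0.le (mem_Icc.mp hj).1))
      (by positivity)
  · refine mul_le_mul_of_nonneg_left (hpow_le hξ0 (hξ.trans (geomSum_le_add_pow ha0.le ha ?_)))
      (by positivity)
    linarith [(mem_Icc.mp hj).2]
  · exact hpow_le hξ0 hξ

section Iteration

variable {T a b c : ℝ} {f : ℝ → ℝ}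

theorem integral_abs_le_of_abs_sub_le (hcont : ContinuousOn f (Set.Icc 0 T)) {t G : ℝ}
    (ht : t ∈ Set.Icc 0 T) (h : ∀ s ∈ Set.Icc 0 t, |f s - f 0| ≤ b * s + G) :
    ∫ s in (0 : ℝ)..t, |f s| ≤ (|f 0| + b / 2 * t + G) * t := by
  have hint : IntervalIntegrable (fun s => |f s|) volume 0 t :=
    ((hcont.mono (Set.Icc_subset_Icc le_rfl ht.2)).abs).intervalIntegrable_of_Icc ht.1
  calc ∫ s in (0 : ℝ)..t, |f s| ≤ ∫ s in (0 : ℝ)..t, (|f 0| + b * s + G) := by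
        refine intervalIntegral.integral_mono_on ht.1 hint
          (Continuous.intervalIntegrable (by fun_prop) _ _) fun s hs => ?_
        have := abs_sub_abs_le_abs_sub (f s) (f 0)
        linarith [h s hs]
    _ = (|f 0| + b / 2 * t + G) * t := by
        rw [intervalIntegral.integral_add (Continuous.intervalIntegrable (by fun_prop) _ _)
          intervalIntegrable_const, intervalIntegral.integral_add intervalIntegrable_const
          (Continuous.intervalIntegrable (by fun_prop) _ _)]
        rw [intervalIntegral.integral_const_mul, integral_id, intervalIntegral.integral_const,
          intervalIntegral.integral_const, smul_eq_mul, smul_eq_mul]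
        ring

theorem abs_sub_le_of_abs_sub_le (ha0 : 0 < a) (ha1 : a ≤ 1) (hb : 0 ≤ b) (hc : 0 ≤ c)
    (hcont : ContinuousOn f (Set.Icc 0 T)) {t G : ℝ} (ht : t ∈ Set.Icc 0 T) (hG : 0 ≤ G)
    (hineq : |f t - f 0| ≤ b * t + c * (∫ s in (0 : ℝ)..t, |f s|) ^ a)
    (h : ∀ s ∈ Set.Icc 0 t, |f s - f 0| ≤ b * s + G) :
    |f t - f 0| ≤ b * t + c * ((|f 0| ^ a + (b / 2) ^ a * t ^ a + G ^ a) * t ^ a) := by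
  have hI0 : 0 ≤ ∫ s in (0 : ℝ)..t, |f s| :=
    intervalIntegral.integral_nonneg ht.1 fun s _ => abs_nonneg _
  have ht0 := ht.1
  calc |f t - f 0| ≤ b * t + c * (∫ s in (0 : ℝ)..t, |f s|) ^ a := hineq
    _ ≤ b * t + c * ((|f 0| + b / 2 * t + G) * t) ^ a := by
        gcongr
        exact integral_abs_le_of_abs_sub_le hcont ht h
    _ ≤ b * t + c * ((|f 0| ^ a + (b / 2) ^ a * t ^ a + G ^ a) * t ^ a) := by
        rw [Real.mul_rpow (by positivity) ht0]
        gcongr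
        calc (|f 0| + b / 2 * t + G) ^ a ≤ (|f 0| + b / 2 * t) ^ a + G ^ a :=
              Real.rpow_add_le_add_rpow (by positivity) hG ha0.le ha1
          _ ≤ |f 0| ^ a + (b / 2 * t) ^ a + G ^ a := by
              gcongr
              exact Real.rpow_add_le_add_rpow (by positivity) (by positivity) ha0.le ha1
          _ = |f 0| ^ a + (b / 2) ^ a * t ^ a + G ^ a := by
              rw [Real.mul_rpow (by positivity) ht0]

theorem abs_sub_le_of_abs_le_one (ha : 0 ≤ a) (hc : 0 ≤ c)
    (hcont : ContinuousOn f (Set.Icc 0 T)) (hbdd : ∀ t ∈ Set.Icc 0 T, |f t| ≤ 1) {t : ℝ}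
    (ht : t ∈ Set.Icc 0 T) (hineq : |f t - f 0| ≤ b * t + c * (∫ s in (0 : ℝ)..t, |f s|) ^ a) :
    |f t - f 0| ≤ b * t + c * t ^ a := by
  have hint : IntervalIntegrable (fun s => |f s|) volume 0 t :=
    ((hcont.mono (Set.Icc_subset_Icc le_rfl ht.2)).abs).intervalIntegrable_of_Icc ht.1
  have hI : ∫ s in (0 : ℝ)..t, |f s| ≤ t := by
    simpa using intervalIntegral.integral_mono_on ht.1 hint intervalIntegrable_const
      fun s hs => hbdd s ⟨hs.1, hs.2.trans ht.2⟩
  have hI0 : 0 ≤ ∫ s in (0 : ℝ)..t, |f s| :=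
    intervalIntegral.integral_nonneg ht.1 fun s _ => abs_nonneg _
  exact hineq.trans (by gcongr)

theorem abs_sub_le_iterBound (ha0 : 0 < a) (ha1 : a ≤ 1) (hb : 0 ≤ b) (hc : 0 ≤ c)
    (hcont : ContinuousOn f (Set.Icc 0 T)) (hbdd : ∀ t ∈ Set.Icc 0 T, |f t| ≤ 1)
    (hineq : ∀ t ∈ Set.Icc 0 T, |f t - f 0| ≤ b * t + c * (∫ s in (0 : ℝ)..t, |f s|) ^ a)
    {D : ℝ} (hcD : c ≤ D) (hD : c * D ^ a ≤ D) (n : ℕ) :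
    ∀ t ∈ Set.Icc 0 T, |f t - f 0| ≤ b * t + D * iterBound a |f 0| (b / 2) n t := by
  have hb2 : 0 ≤ b / 2 := by positivity
  have hD0 : 0 ≤ D := hc.trans hcD
  induction n with
  | zero =>
    intro t ht
    rw [iterBound_zero]
    have ht0 : 0 ≤ t := ht.1
    exact (abs_sub_le_of_abs_le_one ha0.le hc hcont hbdd ht (hineq t ht)).trans (by gcongr)
  | succ n ih =>
    intro t ht
    have ht0 : 0 ≤ t := ht.1
    set Q := iterBound a |f 0| (b / 2) n t
    have hQ : 0 ≤ Q := iterBound_nonneg (abs_nonneg (f 0)) hb2 n ht0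
    have hprev : ∀ s ∈ Set.Icc 0 t, |f s - f 0| ≤ b * s + D * Q := fun s hs =>
      (ih s ⟨hs.1, hs.2.trans ht.2⟩).trans
        (by gcongr; exact iterBound_mono ha0.le (abs_nonneg _) hb2 n hs.1 hs.2)
    refine (abs_sub_le_of_abs_sub_le ha0 ha1 hb hc hcont ht (by positivity) (hineq t ht)
      hprev).trans ?_
    set X := |f 0| ^ a + (b / 2) ^ a * t ^ a
    have hX : 0 ≤ X := by positivity
    rw [Real.mul_rpow hD0 hQ]
    gcongr b * t + ?_
    calc c * ((X + D ^ a * Q ^ a) * t ^ a) = (c * X + c * D ^ a * Q ^ a) * t ^ a := by ring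
      _ ≤ (D * X + D * Q ^ a) * t ^ a := by gcongr
      _ = D * ((X + Q ^ a) * t ^ a) := by ring
      _ ≤ D * iterBound a |f 0| (b / 2) (n + 1) t := by
          gcongr
          exact iterBound_succ ha0 ha1 (abs_nonneg _) hb2 n ht0

end Iteration

theorem stmt0_general (T a b c : ℝ) (hT : T ∈ Set.Ioc (0:ℝ) 1)
    (ha : a ∈ Set.Ioo (0:ℝ) (1/2)) (hb : 0 ≤ b) (hc : 0 ≤ c)
    (f : ℝ → ℝ) (hcont : ContinuousOn f (Set.Icc 0 T))
    (hbdd : ∀ t ∈ Set.Icc (0:ℝ) T, |f t| ≤ 1)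
    (hineq : ∀ t ∈ Set.Icc (0:ℝ) T,
      |f t - f 0| ≤ b * t + c * (∫ s in (0:ℝ)..t, |f s|) ^ a)
    (ξ' : ℝ) (N' : ℕ) (hξ : ξ' ∈ Set.Ioo (0:ℝ) 1)
    (hN2 : ξ' < ∑ j ∈ Finset.Icc 1 (N' + 1), a ^ j) :
    ∀ t ∈ Set.Icc (0:ℝ) T,
      |f t - f 0| ≤
        ((c ^ ((1:ℝ) / (1 - a)) + 1) * ∑ j ∈ Finset.Icc 1 N', |f 0| ^ (a ^ j)) * t ^ a
        + (b + (c ^ ((1:ℝ) / (1 - a)) + 1) * (∑ j ∈ Finset.Icc 1 N', (b / 2) ^ (a ^ j))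
            + c ^ ((1:ℝ) / (1 - a)) + 1) * t ^ ξ' := by
  intro t ht
  set D := c ^ ((1:ℝ) / (1 - a)) + 1
  have hD : c * D ^ a ≤ D :=
    Real.mul_rpow_le_of_rpow_one_div_one_sub_le hc (by linarith [ha.2]) (by linarith)
  have hcD : c ≤ D := calc
    c ≤ c * D ^ a := le_mul_of_one_le_right hc
      (Real.one_le_rpow (by linarith [Real.rpow_nonneg hc ((1:ℝ) / (1 - a))]) ha.1.le)
    _ ≤ D := hD
  have ht1 : t ≤ 1 := ht.2.trans hT.2
  have hbt : t ≤ t ^ ξ' := by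
    simpa using Real.rpow_le_rpow_of_exponent_ge' ht.1 ht1 hξ.1.le hξ.2.le
  calc |f t - f 0| ≤ b * t + D * iterBound a |f 0| (b / 2) N' t :=
        abs_sub_le_iterBound ha.1 (by linarith [ha.2]) hb hc hcont hbdd hineq hcD hD N' t ht
    _ ≤ b * t ^ ξ' + D * ((∑ j ∈ Icc 1 N', |f 0| ^ a ^ j) * t ^ a
          + (∑ j ∈ Icc 1 N', (b / 2) ^ a ^ j + 1) * t ^ ξ') := by
        gcongr
        exact iterBound_le ha.1 ha.2.le (abs_nonneg _) (by positivity) hξ.1.le hN2.le ht.1 ht1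
    _ = _ := by ring

theorem stmt0 (T a b c : ℝ) (hT : T ∈ Set.Ioc (0:ℝ) 1)
    (ha : a ∈ Set.Ioo (0:ℝ) (1/2)) (hb : 0 ≤ b) (hc : 0 ≤ c)
    (f : ℝ → ℝ) (hcont : ContinuousOn f (Set.Icc 0 T))
    (hbdd : ∀ t ∈ Set.Icc (0:ℝ) T, |f t| ≤ 1)
    (hineq : ∀ t ∈ Set.Icc (0:ℝ) T,
      |f t - f 0| ≤ b * t + c * (∫ s in (0:ℝ)..t, |f s|) ^ a)
    (ξ' : ℝ) (N' : ℕ) (hξ : ξ' ∈ Set.Ioo (0:ℝ) 1)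
    (hN1 : ∑ j ∈ Finset.Icc 1 N', a ^ j ≤ ξ')
    (hN2 : ξ' < ∑ j ∈ Finset.Icc 1 (N' + 1), a ^ j) :
    ∀ t ∈ Set.Icc (0:ℝ) T,
      |f t - f 0| ≤
        ((c ^ ((1:ℝ) / (1 - a)) + 1) * ∑ j ∈ Finset.Icc 1 N', |f 0| ^ (a ^ j)) * t ^ a
        + (b + (c ^ ((1:ℝ) / (1 - a)) + 1) * (∑ j ∈ Finset.Icc 1 N', (b / 2) ^ (a ^ j))
            + c ^ ((1:ℝ) / (1 - a)) + 1) * t ^ ξ' :=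
  stmt0_general T a b c hT ha hb hc f hcont hbdd hineq ξ' N' hξ hN2
end

section
/- For reals a, b, c and T ∈ (0,∞), the double integral I(a,b,c)_T = ∫₀ᵀ r^a (∫ᵣᵀ s^b (s-r)^c ds) dr is finite if and only if a > -1, c > -1, and a + b + c > -2. Moreover, when finite, I(a,b,c)_T = (∫₀¹ r^a (1-r)^c dr) · T^{a+b+c+2}/(a+b+c+2). -/
/-!
The substitution `(r, s) = (s u, s)` maps `(0, 1) × (0, T)` onto the triangle `0 < r < s < T`
with Jacobian `s`, and turns the integrand into the product
`u ^ a (1 - u) ^ c · s ^ (a + b + c + 1)` of functions of separate variables. Such a product,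
with neither factor a.e. zero, is integrable exactly when both factors are, and its integral is
the product of the two integrals. The Beta integrand is integrable iff `a, c > -1` (near each
endpoint only one factor is singular), and `∫₀ᵀ s ^ e ds = T ^ (e + 1) / (e + 1)` is finite
iff `e > -1`.
-/

open MeasureTheory Set

theorem integrableOn_mul_continuousOn_iff {X : Type*} [TopologicalSpace X] [MeasurableSpace X]
    [OpensMeasurableSpace X] {μ : Measure X} {f g : X → ℝ} {A K : Set X} (hA : MeasurableSet A)
    (hK : IsCompact K) (hAK : A ⊆ K) (hg : ContinuousOn g K) (hg0 : ∀ x ∈ K, g x ≠ 0) :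
    IntegrableOn (fun x => f x * g x) A μ ↔ IntegrableOn f A μ := by
  refine ⟨fun hfg => ?_, fun hf => hf.mul_continuousOn_of_subset hg hA hK hAK⟩
  refine (integrableOn_congr_fun (fun x hx => ?_) hA).mp
    (hfg.mul_continuousOn_of_subset (hg.inv₀ hg0) hA hK hAK)
  simp [mul_assoc, mul_inv_cancel₀ (hg0 x (hAK hx))]

theorem integrableOn_rpow_mul_one_sub_rpow_Ioo_zero_half_iff (a c : ℝ) :
    IntegrableOn (fun u : ℝ => u ^ a * (1 - u) ^ c) (Ioo 0 (1 / 2)) ↔ -1 < a := by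
  have hpos : ∀ u ∈ Icc (0 : ℝ) (1 / 2), 0 < 1 - u := fun u hu => by linarith [hu.2]
  have hcont : ContinuousOn (fun u : ℝ => (1 - u) ^ c) (Icc 0 (1 / 2)) :=
    (continuousOn_const.sub continuousOn_id).rpow_const fun u hu => Or.inl (hpos u hu).ne'
  rw [integrableOn_mul_continuousOn_iff measurableSet_Ioo isCompact_Icc Ioo_subset_Icc_self hcont
      fun u hu => (Real.rpow_pos_of_pos (hpos u hu) c).ne',
    intervalIntegral.integrableOn_Ioo_rpow_iff (by norm_num)]

theorem integrableOn_rpow_mul_one_sub_rpow_Ioo_half_one_iff (a c : ℝ) :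
    IntegrableOn (fun u : ℝ => u ^ a * (1 - u) ^ c) (Ioo (1 / 2) 1) ↔ -1 < c := by
  rw [← integrableOn_rpow_mul_one_sub_rpow_Ioo_zero_half_iff c a,
    ← intervalIntegrable_iff_integrableOn_Ioo_of_le (by norm_num),
    ← intervalIntegrable_iff_integrableOn_Ioo_of_le (by norm_num),
    ← IntervalIntegrable.comp_sub_left_iff 1]
  norm_num [IntervalIntegrable.symm_iff (b := (0 : ℝ)), mul_comm]

theorem integrableOn_rpow_mul_one_sub_rpow_Ioo_zero_one_iff (a c : ℝ) :
    IntegrableOn (fun u : ℝ => u ^ a * (1 - u) ^ c) (Ioo 0 1) ↔ -1 < a ∧ -1 < c := by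
  rw [← Ioc_union_Ioo_eq_Ioo (by norm_num : (0 : ℝ) ≤ 1 / 2) (by norm_num),
    integrableOn_union, integrableOn_Ioc_iff_integrableOn_Ioo,
    integrableOn_rpow_mul_one_sub_rpow_Ioo_zero_half_iff,
    integrableOn_rpow_mul_one_sub_rpow_Ioo_half_one_iff]

theorem integrableOn_prod_mul_iff {α β 𝕜 : Type*} [MeasurableSpace α] [MeasurableSpace β]
    [NormedDivisionRing 𝕜] {μ : Measure α} {ν : Measure β} [SFinite μ] [SFinite ν]
    {f : α → 𝕜} {g : β → 𝕜} {s : Set α} {t : Set β} (hf : ∃ᵐ x ∂μ.restrict s, f x ≠ 0)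
    (hg : ∃ᵐ y ∂ν.restrict t, g y ≠ 0) :
    IntegrableOn (fun z : α × β => f z.1 * g z.2) (s ×ˢ t) (μ.prod ν) ↔
      IntegrableOn f s μ ∧ IntegrableOn g t ν := by
  rw [IntegrableOn, ← Measure.prod_restrict]
  refine ⟨fun h => ⟨?_, ?_⟩, fun h => h.1.mul_prod h.2⟩
  · obtain ⟨y, hy, hgy⟩ := (h.prod_left_ae.and_frequently hg).exists
    exact (integrable_mul_const_iff (Ne.isUnit hgy) f).mp hy
  · obtain ⟨x, hx, hfx⟩ := (h.prod_right_ae.and_frequently hf).exists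
    exact (integrable_const_mul_iff (Ne.isUnit hfx) g).mp hx

theorem frequently_ae_restrict_of_forall_mem {α : Type*} [MeasurableSpace α] {μ : Measure α}
    {s : Set α} {p : α → Prop} (hs : MeasurableSet s) (hμs : μ s ≠ 0)
    (hp : ∀ x ∈ s, p x) :
    ∃ᵐ x ∂μ.restrict s, p x :=
  haveI := ae_restrict_neBot.2 hμs
  ((ae_restrict_mem hs).mono hp).frequently

theorem exists_hasFDerivAt_snd_mul_fst_det_eq (p : ℝ × ℝ) :
    ∃ L : ℝ × ℝ →L[ℝ] ℝ × ℝ,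
      HasFDerivAt (fun q : ℝ × ℝ => (q.2 * q.1, q.2)) L p ∧ L.det = p.2 := by
  refine ⟨(Matrix.toLin (Module.Basis.finTwoProd ℝ) (Module.Basis.finTwoProd ℝ)
    !![p.2, p.1; 0, 1]).toContinuousLinearMap, ?_, ?_⟩
  · rw [Matrix.toLin_finTwoProd_toContinuousLinearMap]
    refine ((hasFDerivAt_snd.mul hasFDerivAt_fst).prodMk hasFDerivAt_snd).congr_fderiv ?_
    ext <;> simp
  · simp [LinearMap.det_toContinuousLinearMap, LinearMap.det_toLin, Matrix.det_fin_two_of]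

theorem injOn_snd_mul_fst_prodMk {s t : Set ℝ} (ht : ∀ y ∈ t, y ≠ 0) :
    InjOn (fun q : ℝ × ℝ => (q.2 * q.1, q.2)) (s ×ˢ t) := by
  rintro ⟨u, v⟩ huv ⟨u', v'⟩ - h
  simp only [Prod.mk.injEq] at h ⊢
  obtain ⟨h1, rfl⟩ := h
  exact ⟨mul_left_cancel₀ (ht v huv.2) h1, rfl⟩

theorem image_snd_mul_fst_Ioo_prod_Ioo (T : ℝ) :
    (fun q : ℝ × ℝ => (q.2 * q.1, q.2)) '' (Ioo 0 1 ×ˢ Ioo 0 T) =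
      {p : ℝ × ℝ | 0 < p.1 ∧ p.1 < p.2 ∧ p.2 < T} := by
  ext ⟨r, s⟩
  constructor
  · rintro ⟨⟨u, s⟩, ⟨⟨hu0, hu1⟩, hs0, hsT⟩, h⟩
    simp only [Prod.mk.injEq] at h
    obtain ⟨rfl, rfl⟩ := h
    exact ⟨mul_pos hs0 hu0, mul_lt_of_lt_one_right hs0 hu1, hsT⟩
  · rintro ⟨hr, hrs, hsT⟩
    have hs : 0 < s := hr.trans hrs
    exact ⟨(r / s, s), ⟨⟨div_pos hr hs, (div_lt_one hs).2 hrs⟩, hs, hsT⟩,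
      by simp [mul_div_cancel₀ r hs.ne']⟩

section Triangle

variable {E : Type*} [NormedAddCommGroup E] [NormedSpace ℝ E] (T : ℝ) (f : ℝ × ℝ → E)

theorem integrableOn_triangle_iff :
    IntegrableOn f {p : ℝ × ℝ | 0 < p.1 ∧ p.1 < p.2 ∧ p.2 < T} ↔
      IntegrableOn (fun q : ℝ × ℝ => q.2 • f (q.2 * q.1, q.2)) (Ioo 0 1 ×ˢ Ioo 0 T) := by
  choose L hL hdet using exists_hasFDerivAt_snd_mul_fst_det_eq
  have hS : MeasurableSet (Ioo (0 : ℝ) 1 ×ˢ Ioo 0 T) := measurableSet_Ioo.prod measurableSet_Ioo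
  rw [← image_snd_mul_fst_Ioo_prod_Ioo,
    integrableOn_image_iff_integrableOn_abs_det_fderiv_smul volume hS
      (fun q _ => (hL q).hasFDerivWithinAt) (injOn_snd_mul_fst_prodMk fun y hy => hy.1.ne') f]
  refine integrableOn_congr_fun (fun q hq => ?_) hS
  simp [hdet, abs_of_pos hq.2.1]

theorem setIntegral_triangle_eq [CompleteSpace E] :
    ∫ p in {p : ℝ × ℝ | 0 < p.1 ∧ p.1 < p.2 ∧ p.2 < T}, f p =
      ∫ q in Ioo 0 1 ×ˢ Ioo 0 T, q.2 • f (q.2 * q.1, q.2) := by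
  choose L hL hdet using exists_hasFDerivAt_snd_mul_fst_det_eq
  have hS : MeasurableSet (Ioo (0 : ℝ) 1 ×ˢ Ioo 0 T) := measurableSet_Ioo.prod measurableSet_Ioo
  rw [← image_snd_mul_fst_Ioo_prod_Ioo,
    integral_image_eq_integral_abs_det_fderiv_smul volume hS
      (fun q _ => (hL q).hasFDerivWithinAt) (injOn_snd_mul_fst_prodMk fun y hy => hy.1.ne') f]
  refine setIntegral_congr_fun hS (fun q hq => ?_)
  simp [hdet, abs_of_pos hq.2.1]

end Triangle

theorem mul_rpow_mul_rpow_sub_eq {a b c u s : ℝ} (hu0 : 0 ≤ u) (hu1 : u ≤ 1) (hs : 0 < s) :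
    s * ((s * u) ^ a * s ^ b * (s - s * u) ^ c) = u ^ a * (1 - u) ^ c * s ^ (a + b + c + 1) := by
  rw [Real.mul_rpow hs.le hu0, ← mul_one_sub, Real.mul_rpow hs.le (by linarith),
    Real.rpow_add hs, Real.rpow_add hs, Real.rpow_add hs, Real.rpow_one]
  ring

theorem stmt3 (a b c T : ℝ) (hT : 0 < T) :
    (IntegrableOn (fun p : ℝ × ℝ => p.1 ^ a * p.2 ^ b * (p.2 - p.1) ^ c)
        {p : ℝ × ℝ | 0 < p.1 ∧ p.1 < p.2 ∧ p.2 < T} ↔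
      (-1 < a ∧ -1 < c ∧ -2 < a + b + c)) ∧
    ((-1 < a ∧ -1 < c ∧ -2 < a + b + c) →
      (∫ p in {p : ℝ × ℝ | 0 < p.1 ∧ p.1 < p.2 ∧ p.2 < T},
          p.1 ^ a * p.2 ^ b * (p.2 - p.1) ^ c) =
        (∫ r in (0:ℝ)..1, r ^ a * (1 - r) ^ c) * T ^ (a + b + c + 2) / (a + b + c + 2)) := by
  have hS : MeasurableSet (Ioo (0 : ℝ) 1 ×ˢ Ioo 0 T) := measurableSet_Ioo.prod measurableSet_Ioo
  have hpull :
      EqOn (fun q : ℝ × ℝ => q.2 • ((q.2 * q.1) ^ a * q.2 ^ b * (q.2 - q.2 * q.1) ^ c))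
      (fun q => q.1 ^ a * (1 - q.1) ^ c * q.2 ^ (a + b + c + 1)) (Ioo 0 1 ×ˢ Ioo 0 T) :=
    fun q hq => mul_rpow_mul_rpow_sub_eq hq.1.1.le hq.1.2.le hq.2.1
  have hbeta : ∃ᵐ u ∂volume.restrict (Ioo (0 : ℝ) 1), u ^ a * (1 - u) ^ c ≠ 0 :=
    frequently_ae_restrict_of_forall_mem measurableSet_Ioo (by simp) fun u hu =>
      (mul_pos (Real.rpow_pos_of_pos hu.1 a) (Real.rpow_pos_of_pos (sub_pos.2 hu.2) c)).ne'
  have hpow : ∃ᵐ s ∂volume.restrict (Ioo 0 T), s ^ (a + b + c + 1) ≠ 0 :=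
    frequently_ae_restrict_of_forall_mem measurableSet_Ioo (by simp [hT]) fun s hs =>
      (Real.rpow_pos_of_pos hs.1 _).ne'
  have hiff : IntegrableOn (fun p : ℝ × ℝ => p.1 ^ a * p.2 ^ b * (p.2 - p.1) ^ c)
        {p : ℝ × ℝ | 0 < p.1 ∧ p.1 < p.2 ∧ p.2 < T} ↔
      (-1 < a ∧ -1 < c ∧ -2 < a + b + c) := by
    have hsum : -1 < a + b + c + 1 ↔ -2 < a + b + c := by constructor <;> intro h <;> linarith
    rw [integrableOn_triangle_iff, integrableOn_congr_fun hpull hS, Measure.volume_eq_prod,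
      integrableOn_prod_mul_iff hbeta hpow,
      integrableOn_rpow_mul_one_sub_rpow_Ioo_zero_one_iff,
      intervalIntegral.integrableOn_Ioo_rpow_iff hT, hsum, and_assoc]
  refine ⟨hiff, fun ⟨ha, hc, he⟩ => ?_⟩
  have he' : -1 < a + b + c + 1 := by linarith
  rw [setIntegral_triangle_eq, setIntegral_congr_fun hS hpull, Measure.volume_eq_prod,
    setIntegral_prod_mul (fun u : ℝ => u ^ a * (1 - u) ^ c) (fun s : ℝ => s ^ (a + b + c + 1)),
    ← integral_Ioc_eq_integral_Ioo, ← integral_Ioc_eq_integral_Ioo,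
    ← intervalIntegral.integral_of_le zero_le_one, ← intervalIntegral.integral_of_le hT.le,
    integral_rpow (Or.inl he'), Real.zero_rpow (by linarith),
    show a + b + c + 1 + 1 = a + b + c + 2 by ring]
  ring
end

section
/- Fix 0 < β' < β < 1/2, ε ∈ (0,1], s_i ≥ 0, and a time offset t_j ∈ (s_i, s_i+1]. For any spatial point y with 2(ε^{1/2} + (t_j - s_i)^{β'}) ≤ |y - x_i|, let t^c_j(y) > t_j be defined as the first time t such that ε^{1/2} + (t - s_i)^β + ε^{1/2} + (t - t_j)^β = |y - x_i| (the contact time of the two parabolas). Then the minimum of t^c_j(y) over all such y is attained at y with |y - x_i| = 2(ε^{1/2} + (t_j - s_i)^{β'}), and equals s_i + A(t_j - s_i) · (t_j - s_i)^{β'/β}, where A(r) is the unique solution in (r^{1-β'/β}, ∞) of A^β + (A - r^{1-β'/β})^β = 2. -/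
theorem stmt10 (β β' ε s_i t_j x_i A : ℝ)
    (hβ' : 0 < β') (hββ : β' < β) (hβ : β < 1/2)
    (hε : ε ∈ Set.Ioc (0:ℝ) 1) (hsi : 0 ≤ s_i)
    (htj : t_j ∈ Set.Ioc s_i (s_i + 1))
    (hA : (t_j - s_i) ^ (1 - β' / β) < A)
    (hAeq : A ^ β + (A - (t_j - s_i) ^ (1 - β' / β)) ^ β = 2) :
    (∀ y : ℝ, 2 * (ε ^ ((1:ℝ)/2) + (t_j - s_i) ^ β') ≤ |y - x_i| →
      s_i + A * (t_j - s_i) ^ (β' / β) ≤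
        sInf {t : ℝ | t_j < t ∧
          ε ^ ((1:ℝ)/2) + (t - s_i) ^ β + (ε ^ ((1:ℝ)/2) + (t - t_j) ^ β) = |y - x_i|}) ∧
    (∀ y : ℝ, |y - x_i| = 2 * (ε ^ ((1:ℝ)/2) + (t_j - s_i) ^ β') →
      sInf {t : ℝ | t_j < t ∧
          ε ^ ((1:ℝ)/2) + (t - s_i) ^ β + (ε ^ ((1:ℝ)/2) + (t - t_j) ^ β) = |y - x_i|}
        = s_i + A * (t_j - s_i) ^ (β' / β)) := by
  obtain ⟨hε0, hε1⟩ := hε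
  obtain ⟨hst, hts1⟩ := htj
  set r : ℝ := t_j - s_i with hrdef
  have hr : 0 < r := sub_pos.2 hst
  have hr1 : r ≤ 1 := by simp only [hrdef]; linarith
  have hβpos : 0 < β := hβ'.trans hββ
  have hA0 : 0 < A := (Real.rpow_pos_of_pos hr _).trans hA
  set c : ℝ := A * r ^ (β' / β) with hcdef
  have hrb : 0 < r ^ (β' / β) := Real.rpow_pos_of_pos hr _
  have hc0 : 0 < c := mul_pos hA0 hrb
  have hsplit : r ^ (1 - β'/β) * r ^ (β'/β) = r := by
    rw [← Real.rpow_add hr]; simp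
  have hcr : r < c := by
    calc r = r ^ (1 - β'/β) * r ^ (β'/β) := hsplit.symm
      _ < A * r ^ (β'/β) := mul_lt_mul_of_pos_right hA hrb
  have hpow : (r ^ (β'/β)) ^ β = r ^ β' := by
    rw [← Real.rpow_mul hr.le, div_mul_cancel₀ _ hβpos.ne']
  -- key algebraic identity: c^β + (c-r)^β = 2 r^β'
  have hkey : c ^ β + (c - r) ^ β = 2 * r ^ β' := by
    have h1 : c ^ β = A ^ β * r ^ β' := by
      rw [hcdef, Real.mul_rpow hA0.le hrb.le, hpow]
    have hsub : c - r = r ^ (β'/β) * (A - r ^ (1 - β'/β)) := by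
      rw [mul_sub]
      rw [show r ^ (β'/β) * r ^ (1 - β'/β) = r by rw [mul_comm]; exact hsplit]
      ring
    have h2 : (c - r) ^ β = r ^ β' * (A - r ^ (1 - β'/β)) ^ β := by
      rw [hsub, Real.mul_rpow hrb.le (sub_nonneg.2 hA.le), hpow]
    calc c ^ β + (c - r) ^ β
        = (A ^ β + (A - r ^ (1 - β'/β)) ^ β) * r ^ β' := by rw [h1, h2]; ring
      _ = 2 * r ^ β' := by rw [hAeq]
  -- monotonicity of f t = (t - s_i)^β + (t - t_j)^β on [t_j, ∞)
  have hmono : ∀ a b : ℝ, t_j ≤ a → a < b →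
      (a - s_i) ^ β + (a - t_j) ^ β < (b - s_i) ^ β + (b - t_j) ^ β := by
    intro a b ha hab
    have h1 : (a - s_i) ^ β < (b - s_i) ^ β :=
      Real.rpow_lt_rpow (by simp only [hrdef] at hr; linarith) (by linarith) hβpos
    have h2 : (a - t_j) ^ β < (b - t_j) ^ β :=
      Real.rpow_lt_rpow (by linarith) (by linarith) hβpos
    linarith
  have htj_lt : t_j < s_i + c := by simp only [hrdef] at hcr; linarith
  -- value at the candidate time
  have hval : ε ^ ((1:ℝ)/2) + (s_i + c - s_i) ^ β +
      (ε ^ ((1:ℝ)/2) + (s_i + c - t_j) ^ β) = 2 * (ε ^ ((1:ℝ)/2) + r ^ β') := by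
    have e1 : s_i + c - s_i = c := by ring
    have e2 : s_i + c - t_j = c - r := by simp only [hrdef]; ring
    rw [e1, e2]
    linarith [hkey]
  have hrbb' : r ^ β ≤ r ^ β' := Real.rpow_le_rpow_of_exponent_ge hr hr1 hββ.le
  have hrβ'pos : 0 < r ^ β' := Real.rpow_pos_of_pos hr _
  have hεpos : 0 < ε ^ ((1:ℝ)/2) := Real.rpow_pos_of_pos hε0 _
  constructor
  · -- Part 1: lower bound
    intro y hy
    set S := {t : ℝ | t_j < t ∧
        ε ^ ((1:ℝ)/2) + (t - s_i) ^ β + (ε ^ ((1:ℝ)/2) + (t - t_j) ^ β) = |y - x_i|} with hS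
    -- nonemptiness via IVT
    have hSne : S.Nonempty := by
      set M : ℝ := |y - x_i| - 2 * ε ^ ((1:ℝ)/2) with hM
      have hM2 : 2 * r ^ β' ≤ M := by simp only [hM]; linarith
      have hMpos : 0 < M := lt_of_lt_of_le (by linarith) hM2
      set T : ℝ := t_j + M ^ (1/β) with hT
      have hTt : t_j ≤ T := by
        have : 0 ≤ M ^ (1/β) := Real.rpow_nonneg hMpos.le _
        simp only [hT]; linarith
      set g : ℝ → ℝ := fun t =>
        ε ^ ((1:ℝ)/2) + (t - s_i) ^ β + (ε ^ ((1:ℝ)/2) + (t - t_j) ^ β) with hg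
      have hcont : ContinuousOn g (Set.Icc t_j T) := by
        apply ContinuousOn.add
        apply ContinuousOn.add continuousOn_const
        · exact ((continuousOn_id.sub continuousOn_const).rpow_const
            fun x _ => Or.inr hβpos.le)
        · exact continuousOn_const.add
            ((continuousOn_id.sub continuousOn_const).rpow_const
              fun x _ => Or.inr hβpos.le)
      have hgtj : g t_j = 2 * ε ^ ((1:ℝ)/2) + r ^ β := by
        simp only [hg, hrdef, sub_self, Real.zero_rpow hβpos.ne']
        ring
      have hgtj_lt : g t_j < |y - x_i| := by
        rw [hgtj]; linarith
      have hgT : |y - x_i| ≤ g T := by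
        have hTtj : (T - t_j) ^ β = M := by
          simp only [hT, add_sub_cancel_left]
          rw [← Real.rpow_mul hMpos.le, one_div, inv_mul_cancel₀ hβpos.ne',
            Real.rpow_one]
        have hTs : 0 ≤ (T - s_i) ^ β := by
          apply Real.rpow_nonneg
          simp only [hrdef] at hr; linarith
        simp only [hg]
        rw [hTtj]
        simp only [hM]
        linarith
      have := intermediate_value_Icc hTt hcont
      have hmem : |y - x_i| ∈ Set.Icc (g t_j) (g T) := ⟨hgtj_lt.le, hgT⟩
      obtain ⟨t, ht, hgt⟩ := this hmem
      refine ⟨t, ?_, hgt⟩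
      rcases eq_or_lt_of_le ht.1 with h | h
      · exfalso; rw [← h] at hgt; linarith [hgtj_lt, hgt.ge]
      · exact h
    -- lower bound
    apply le_csInf hSne
    intro t ht
    obtain ⟨ht1, ht2⟩ := ht
    by_contra hcon
    push_neg at hcon
    have hlt := hmono t (s_i + c) ht1.le hcon
    have e1 : s_i + c - s_i = c := by ring
    have e2 : s_i + c - t_j = c - r := by simp only [hrdef]; ring
    rw [e1, e2, hkey] at hlt
    have : (t - s_i) ^ β + (t - t_j) ^ β = |y - x_i| - 2 * ε ^ ((1:ℝ)/2) := by
      linarith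
    linarith
  · -- Part 2: exact value
    intro y hy
    have hSeq : {t : ℝ | t_j < t ∧
        ε ^ ((1:ℝ)/2) + (t - s_i) ^ β + (ε ^ ((1:ℝ)/2) + (t - t_j) ^ β) = |y - x_i|}
        = {s_i + c} := by
      ext t
      simp only [Set.mem_setOf_eq, Set.mem_singleton_iff]
      constructor
      · rintro ⟨ht1, ht2⟩
        by_contra hne
        rcases lt_or_gt_of_ne hne with h | h
        · have hlt := hmono t (s_i + c) ht1.le h
          rw [hval, hy] at *
          have e1 : s_i + c - s_i = c := by ring
          have e2 : s_i + c - t_j = c - r := by simp only [hrdef]; ring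
          rw [e1, e2, hkey] at hlt
          linarith
        · have hlt := hmono (s_i + c) t htj_lt.le h
          have e1 : s_i + c - s_i = c := by ring
          have e2 : s_i + c - t_j = c - r := by simp only [hrdef]; ring
          rw [e1, e2, hkey] at hlt
          rw [hy] at ht2
          linarith
      · rintro rfl
        exact ⟨htj_lt, by rw [hval, hy]⟩
    rw [hSeq, csInf_singleton]
end
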